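/- For every real number θ, the two linear vector fields ((2 + sin²θ)X − (cos θ sin θ)Y, −(cos θ sin θ)X + (2 + cos²θ)Y) and (−(2 cos θ sin θ)X + (2 cos²θ)Y, −(2 sin²θ)X + (2 cos θ sin θ)Y) form a basis of the subspace {ξ ∈ V₁ : ξ is 1-liftably tangent to c_θ}, i.e., of the kernel of the first reduced Kodaira–Spencer–Mather map ₁ω̄c_θ of the rotated cusp c_θ. -/

import Mathlib

open Polynomial

/-- First component of the rotated cusp `c_θ(x) = R_θ (x², x³)` as a polynomial over `K`. -/
noncomputable def cusp1 (K : Type*) [RCLike K] (θ : ℝ) : Polynomial K :=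
  C ((Real.cos θ : K)) * X ^ 2 - C ((Real.sin θ : K)) * X ^ 3

/-- Second component of the rotated cusp. -/
noncomputable def cusp2 (K : Type*) [RCLike K] (θ : ℝ) : Polynomial K :=
  C ((Real.sin θ : K)) * X ^ 2 + C ((Real.cos θ : K)) * X ^ 3

/-- First component of the derivative `c_θ'(x)`. -/
noncomputable def dcusp1 (K : Type*) [RCLike K] (θ : ℝ) : Polynomial K :=
  C ((Real.cos θ : K)) * (2 * X) - C ((Real.sin θ : K)) * (3 * X ^ 2)

/-- Second component of the derivative `c_θ'(x)`. -/
noncomputable def dcusp2 (K : Type*) [RCLike K] (θ : ℝ) : Polynomial K :=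
  C ((Real.sin θ : K)) * (2 * X) + C ((Real.cos θ : K)) * (3 * X ^ 2)

/-- Composition `P(c_θ(x))` of a two-variable polynomial with the rotated cusp. -/
noncomputable def cuspEval (K : Type*) [RCLike K] (θ : ℝ) (P : MvPolynomial (Fin 2) K) :
    Polynomial K :=
  MvPolynomial.aeval ![cusp1 K θ, cusp2 K θ] P

/-- `ξ = (P, Q)` is `i`-liftably tangent to the rotated cusp `c_θ`:
there is `η ∈ K[x]` with `x^(2i+2)` dividing both `P(c_θ(x)) - η(x)·c_θ'(x)₁`
and `Q(c_θ(x)) - η(x)·c_θ'(x)₂`.  This characterizes the kernel of the `i`-th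
reduced Kodaira–Spencer–Mather map of the cusp `c_θ`. -/
def LiftTang (K : Type*) [RCLike K] (i : ℕ) (θ : ℝ)
    (ξ : MvPolynomial (Fin 2) K × MvPolynomial (Fin 2) K) : Prop :=
  ∃ η : Polynomial K,
    (X : Polynomial K) ^ (2 * i + 2) ∣ cuspEval K θ ξ.1 - η * dcusp1 K θ ∧
    (X : Polynomial K) ^ (2 * i + 2) ∣ cuspEval K θ ξ.2 - η * dcusp2 K θ

/-- `V_i`: pairs of homogeneous polynomials of degree `i` in `K[X, Y]`,
identified with the jet space `m₀^i θ₀(2)/m₀^(i+1) θ₀(2)`. -/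
noncomputable def Vsp (K : Type*) [RCLike K] (i : ℕ) :
    Submodule K (MvPolynomial (Fin 2) K × MvPolynomial (Fin 2) K) :=
  (MvPolynomial.homogeneousSubmodule (Fin 2) K i).prod
    (MvPolynomial.homogeneousSubmodule (Fin 2) K i)

/-- A family of angles is admissible if the difference of any two distinct members
is not an integer multiple of `π`. -/
def Admissible {n : ℕ} (θ : Fin n → ℝ) : Prop :=
  ∀ j k, j ≠ k → ∀ m : ℤ, θ j - θ k ≠ m * Real.pi

open MvPolynomial in
/-- The linear vector field `((2 + sin²θ)X − (cos θ sin θ)Y, −(cos θ sin θ)X + (2 + cos²θ)Y)`. -/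
noncomputable def kerVec1 (K : Type*) [RCLike K] (θ : ℝ) :
    MvPolynomial (Fin 2) K × MvPolynomial (Fin 2) K :=
  (MvPolynomial.C (((2 + Real.sin θ ^ 2 : ℝ) : K)) * X 0 - MvPolynomial.C (((Real.cos θ * Real.sin θ : ℝ) : K)) * X 1,
   -(MvPolynomial.C (((Real.cos θ * Real.sin θ : ℝ) : K)) * X 0)
     + MvPolynomial.C (((2 + Real.cos θ ^ 2 : ℝ) : K)) * X 1)

open MvPolynomial in
/-- The linear vector field `(−(2 cos θ sin θ)X + (2 cos²θ)Y, −(2 sin²θ)X + (2 cos θ sin θ)Y)`. -/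
noncomputable def kerVec2 (K : Type*) [RCLike K] (θ : ℝ) :
    MvPolynomial (Fin 2) K × MvPolynomial (Fin 2) K :=
  (-(MvPolynomial.C (((2 * (Real.cos θ * Real.sin θ) : ℝ) : K)) * X 0)
     + MvPolynomial.C (((2 * Real.cos θ ^ 2 : ℝ) : K)) * X 1,
   -(MvPolynomial.C (((2 * Real.sin θ ^ 2 : ℝ) : K)) * X 0)
     + MvPolynomial.C (((2 * (Real.cos θ * Real.sin θ) : ℝ) : K)) * X 1)

/-!
In coordinates rotated by `θ` the cusp `c_θ` becomes the standard cusp `(x², x³)`, its velocity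
becomes `(2x, 3x²)`, and a linear field with matrix `M` becomes one with matrix `N = R_θᵀ M R_θ`.
For the standard cusp, `N (x², x³) ≡ η (2x, 3x²) mod x⁴` forces `η(0) = 0`, hence
`N₁₀ = 0` and `3 N₀₀ = 2 N₁₁ = 6 η'(0)`: the solutions are spanned by the Euler field `diag(2, 3)` of the
weighted homogeneous cusp and by `!![0, 2; 0, 0]`. The two fields of the theorem are exactly
their rotations `R_θ N R_θᵀ`.
-/

open scoped Matrix

theorem MvPolynomial.IsHomogeneous.eq_sum_C_mul_X {R σ : Type*} [CommSemiring R] [Fintype σ]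
    {P : MvPolynomial σ R} (hP : P.IsHomogeneous 1) :
    P = ∑ i, MvPolynomial.C (P.coeff (Finsupp.single i 1)) * MvPolynomial.X i := by
  classical
  ext m
  simp only [MvPolynomial.coeff_sum, MvPolynomial.coeff_C_mul, MvPolynomial.coeff_X]
  by_cases hm : m.degree = 1
  · obtain ⟨a, rfl⟩ : m ∈ Set.range (Finsupp.single · 1) := Finsupp.range_single_one ▸ hm
    simp [Finsupp.single_left_inj one_ne_zero]
  · rw [hP.coeff_eq_zero hm]
    refine (Finset.sum_eq_zero fun i _ => ?_).symm
    rw [if_neg (by rintro rfl; exact hm (Finsupp.degree_single i 1)), mul_zero]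

section LinearField

variable {R : Type*} [CommSemiring R]

noncomputable def linearField :
    Matrix (Fin 2) (Fin 2) R →ₗ[R] MvPolynomial (Fin 2) R × MvPolynomial (Fin 2) R where
  toFun M := (∑ j, MvPolynomial.C (M 0 j) * MvPolynomial.X j,
    ∑ j, MvPolynomial.C (M 1 j) * MvPolynomial.X j)
  map_add' M N := by simp [add_mul, Finset.sum_add_distrib]
  map_smul' a M := by simp [MvPolynomial.smul_eq_C_mul, mul_assoc]

@[simp]
theorem linearField_fst (M : Matrix (Fin 2) (Fin 2) R) :
    (linearField M).1 = ∑ j, MvPolynomial.C (M 0 j) * MvPolynomial.X j :=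
  rfl

@[simp]
theorem linearField_snd (M : Matrix (Fin 2) (Fin 2) R) :
    (linearField M).2 = ∑ j, MvPolynomial.C (M 1 j) * MvPolynomial.X j :=
  rfl

theorem coeff_single_sum_C_mul_X (v : Fin 2 → R) (j : Fin 2) :
    (∑ k, MvPolynomial.C (v k) * MvPolynomial.X k).coeff (Finsupp.single j 1) = v j := by
  simp only [MvPolynomial.coeff_sum, MvPolynomial.coeff_C_mul, MvPolynomial.coeff_X,
    Finsupp.single_left_inj one_ne_zero, mul_ite, mul_one, mul_zero, Finset.sum_ite_eq',
    Finset.mem_univ, if_true]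

theorem linearField_injective : Function.Injective (linearField (R := R)) := by
  intro M N h
  ext i j
  have row0 : M 0 j = N 0 j := by
    simpa only [linearField_fst, coeff_single_sum_C_mul_X] using
      congrArg (fun ξ => ξ.1.coeff (Finsupp.single j 1)) h
  have row1 : M 1 j = N 1 j := by
    simpa only [linearField_snd, coeff_single_sum_C_mul_X] using
      congrArg (fun ξ => ξ.2.coeff (Finsupp.single j 1)) h
  fin_cases i
  exacts [row0, row1]

end LinearField

theorem Vsp_one_eq_range_linearField (K : Type*) [RCLike K] :
    Vsp K 1 = LinearMap.range linearField := by
  ext ξ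
  constructor
  · rintro ⟨h1, h2⟩
    refine ⟨Matrix.of ![fun j => ξ.1.coeff (Finsupp.single j 1),
      fun j => ξ.2.coeff (Finsupp.single j 1)], ?_⟩
    ext : 1
    · exact ((MvPolynomial.mem_homogeneousSubmodule _ _).1 h1).eq_sum_C_mul_X.symm
    · exact ((MvPolynomial.mem_homogeneousSubmodule _ _).1 h2).eq_sum_C_mul_X.symm
  · rintro ⟨M, rfl⟩
    have hom : ∀ i, (∑ j, MvPolynomial.C (M i j) * MvPolynomial.X j :
        MvPolynomial (Fin 2) K).IsHomogeneous 1 := fun i =>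
      MvPolynomial.IsHomogeneous.sum _ _ _ fun j _ => (MvPolynomial.isHomogeneous_X K j).C_mul _
    exact ⟨hom 0, hom 1⟩

theorem dvd_and_dvd_iff_of_sq_add_sq_eq_one {R : Type*} [CommRing R] {c s a u v : R}
    (h : c ^ 2 + s ^ 2 = 1) : a ∣ u ∧ a ∣ v ↔ a ∣ c * u + s * v ∧ a ∣ -s * u + c * v := by
  constructor
  · rintro ⟨hu, hv⟩
    exact ⟨dvd_add (hu.mul_left c) (hv.mul_left s), dvd_add (hu.mul_left _) (hv.mul_left c)⟩
  · rintro ⟨h₁, h₂⟩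
    have hu : u = c * (c * u + s * v) - s * (-s * u + c * v) := by linear_combination -u * h
    have hv : v = s * (c * u + s * v) + c * (-s * u + c * v) := by linear_combination -v * h
    exact ⟨hu ▸ dvd_sub (h₁.mul_left c) (h₂.mul_left s), hv ▸ dvd_add (h₁.mul_left s) (h₂.mul_left c)⟩

theorem exists_lift_standardCusp_iff {F : Type*} [Field F] [CharZero F] (p q r w : F) :
    (∃ η : F[X], X ^ 4 ∣ C p * X ^ 2 + C q * X ^ 3 - η * (2 * X) ∧
        X ^ 4 ∣ C r * X ^ 2 + C w * X ^ 3 - η * (3 * X ^ 2)) ↔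
      r = 0 ∧ 3 * p = 2 * w := by
  constructor
  · rintro ⟨η, h₁, h₂⟩
    rw [X_pow_dvd_iff] at h₁ h₂
    have e1 := h₁ 1 (by norm_num)
    have e2 := h₁ 2 (by norm_num)
    have f2 := h₂ 2 (by norm_num)
    have f3 := h₂ 3 (by norm_num)
    simp only [coeff_sub, coeff_add, coeff_C_mul_X_pow, mul_comm η, mul_assoc, coeff_ofNat_mul,
      coeff_X_mul, coeff_X_pow_mul'] at e1 e2 f2 f3
    norm_num at e1 e2 f2 f3
    exact ⟨by linear_combination f2 + 3 * e1, by linear_combination 3 * e2 - 2 * f3⟩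
  · rintro ⟨rfl, hw⟩
    have half : ∀ a : F, C (a / 2) * 2 = C a := fun a => by
      rw [← map_ofNat C 2, ← C_mul, div_mul_cancel₀ a two_ne_zero]
    have hwC : C w = C (p / 2) * 3 := by
      rw [← map_ofNat C 3, ← C_mul]
      congr 1
      linear_combination -hw / 2
    refine ⟨C (p / 2) * X + C (q / 2) * X ^ 2, ⟨0, ?_⟩, ⟨-(C (q / 2) * 3), ?_⟩⟩
    · linear_combination -X ^ 2 * half p - X ^ 3 * half q
    · simp only [map_zero]
      linear_combination X ^ 3 * hwC

theorem linearIndependent_standardCuspKernel {F : Type*} [Field F] [CharZero F] :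
    LinearIndependent F ![!![(2 : F), 0; 0, 3], !![0, 2; 0, 0]] := by
  rw [LinearIndependent.pair_iff]
  intro a b h
  exact ⟨by simpa using congrFun (congrFun h 0) 0, by simpa using congrFun (congrFun h 0) 1⟩

theorem eq_smul_add_smul_of_mem_standardCuspKernel {F : Type*} [Field F] [CharZero F]
    {N : Matrix (Fin 2) (Fin 2) F} (h₁₀ : N 1 0 = 0) (h : 3 * N 0 0 = 2 * N 1 1) :
    N = (N 0 0 / 2) • !![2, 0; 0, 3] + (N 0 1 / 2) • !![0, 2; 0, 0] := by
  ext i j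
  fin_cases i <;> fin_cases j <;> simp [h₁₀]
  linear_combination -h / 2

section RotatedCusp

variable {K : Type*} [RCLike K]

theorem ofReal_cos_sq_add_ofReal_sin_sq (θ : ℝ) :
    (Real.cos θ : K) ^ 2 + (Real.sin θ : K) ^ 2 = 1 := by
  exact_mod_cast Real.cos_sq_add_sin_sq θ

variable (K) in
noncomputable def rotationMatrix (θ : ℝ) : Matrix (Fin 2) (Fin 2) K :=
  !![(Real.cos θ : K), -(Real.sin θ : K); (Real.sin θ : K), (Real.cos θ : K)]

theorem rotationMatrix_transpose_mul_self (θ : ℝ) :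
    (rotationMatrix K θ)ᵀ * rotationMatrix K θ = 1 := by
  have h := ofReal_cos_sq_add_ofReal_sin_sq (K := K) θ
  ext i j
  fin_cases i <;> fin_cases j <;>
    simp [rotationMatrix, Matrix.mul_apply, Fin.sum_univ_two, ← sq, mul_comm, h, add_comm]

theorem rotationMatrix_mul_transpose_self (θ : ℝ) :
    rotationMatrix K θ * (rotationMatrix K θ)ᵀ = 1 :=
  mul_eq_one_comm.mp (rotationMatrix_transpose_mul_self θ)

theorem rotationMatrix_conj_cancel (θ : ℝ) (N : Matrix (Fin 2) (Fin 2) K) :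
    (rotationMatrix K θ)ᵀ * (rotationMatrix K θ * (N * (rotationMatrix K θ)ᵀ)) *
      rotationMatrix K θ = N := by
  rw [← mul_assoc, ← mul_assoc, rotationMatrix_transpose_mul_self, one_mul, mul_assoc,
    rotationMatrix_transpose_mul_self, mul_one]

theorem cuspEval_sum_C_mul_X (θ : ℝ) (v : Fin 2 → K) :
    cuspEval K θ (∑ j, MvPolynomial.C (v j) * MvPolynomial.X j) =
      C (v 0) * cusp1 K θ + C (v 1) * cusp2 K θ := by
  simp [cuspEval, Fin.sum_univ_two, MvPolynomial.aeval_X, algebraMap_eq]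

theorem liftTang_one_linearField_iff (θ : ℝ) (M : Matrix (Fin 2) (Fin 2) K) :
    LiftTang K 1 θ (linearField M) ↔
      ((rotationMatrix K θ)ᵀ * M * rotationMatrix K θ) 1 0 = 0 ∧
        3 * ((rotationMatrix K θ)ᵀ * M * rotationMatrix K θ) 0 0 =
          2 * ((rotationMatrix K θ)ᵀ * M * rotationMatrix K θ) 1 1 := by
  set N := (rotationMatrix K θ)ᵀ * M * rotationMatrix K θ with hN
  have pyth : C (Real.cos θ : K) ^ 2 + C (Real.sin θ : K) ^ 2 = 1 := by
    simpa only [map_add, map_pow, map_one] using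
      congrArg (C : K → K[X]) (ofReal_cos_sq_add_ofReal_sin_sq θ)
  rw [LiftTang, ← exists_lift_standardCusp_iff (N 0 0) (N 0 1) (N 1 0) (N 1 1)]
  refine exists_congr fun η => ?_
  rw [dvd_and_dvd_iff_of_sq_add_sq_eq_one pyth, linearField_fst, linearField_snd,
    cuspEval_sum_C_mul_X, cuspEval_sum_C_mul_X]
  simp only [hN, Matrix.mul_apply, Matrix.transpose_apply, Fin.sum_univ_two, rotationMatrix,
    Matrix.of_apply, Matrix.cons_val', Matrix.cons_val_zero, Matrix.cons_val_one,
    Matrix.cons_val_fin_one, cusp1, cusp2, dcusp1, dcusp2, map_add, map_mul, map_neg]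
  refine and_congr (iff_of_eq (congrArg _ ?_)) (iff_of_eq (congrArg _ ?_))
  · linear_combination (-(η * (2 * X))) * pyth
  · linear_combination (-(η * (3 * X ^ 2))) * pyth

variable (K) in
noncomputable def rotatedLinearField (θ : ℝ) :
    Matrix (Fin 2) (Fin 2) K →ₗ[K] MvPolynomial (Fin 2) K × MvPolynomial (Fin 2) K :=
  linearField ∘ₗ LinearMap.mulLeft K (rotationMatrix K θ) ∘ₗ
    LinearMap.mulRight K (rotationMatrix K θ)ᵀ

theorem rotatedLinearField_apply (θ : ℝ) (N : Matrix (Fin 2) (Fin 2) K) :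
    rotatedLinearField K θ N =
      linearField (rotationMatrix K θ * (N * (rotationMatrix K θ)ᵀ)) :=
  rfl

theorem rotatedLinearField_injective (θ : ℝ) :
    Function.Injective (rotatedLinearField K θ) := by
  intro N N' h
  rw [rotatedLinearField_apply, rotatedLinearField_apply] at h
  rw [← rotationMatrix_conj_cancel θ N, ← rotationMatrix_conj_cancel θ N',
    linearField_injective h]

theorem range_rotatedLinearField (θ : ℝ) :
    LinearMap.range (rotatedLinearField K θ) = Vsp K 1 := by
  rw [Vsp_one_eq_range_linearField]
  refine le_antisymm (LinearMap.range_comp_le_range _ _) ?_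
  rintro _ ⟨M, rfl⟩
  refine ⟨(rotationMatrix K θ)ᵀ * M * rotationMatrix K θ, ?_⟩
  rw [rotatedLinearField_apply, mul_assoc, mul_assoc, rotationMatrix_mul_transpose_self, mul_one,
    ← mul_assoc, rotationMatrix_mul_transpose_self, one_mul]

theorem liftTang_rotatedLinearField_iff (θ : ℝ) (N : Matrix (Fin 2) (Fin 2) K) :
    LiftTang K 1 θ (rotatedLinearField K θ N) ↔ N 1 0 = 0 ∧ 3 * N 0 0 = 2 * N 1 1 := by
  rw [rotatedLinearField_apply, liftTang_one_linearField_iff, rotationMatrix_conj_cancel]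

theorem kerVec1_eq_rotatedLinearField (θ : ℝ) :
    kerVec1 K θ = rotatedLinearField K θ !![2, 0; 0, 3] := by
  have h := ofReal_cos_sq_add_ofReal_sin_sq (K := K) θ
  have hM : rotationMatrix K θ * (!![2, 0; 0, 3] * (rotationMatrix K θ)ᵀ) =
      !![((2 + Real.sin θ ^ 2 : ℝ) : K), -((Real.cos θ * Real.sin θ : ℝ) : K);
        -((Real.cos θ * Real.sin θ : ℝ) : K), ((2 + Real.cos θ ^ 2 : ℝ) : K)] := by
    ext i j
    fin_cases i <;> fin_cases j <;>
      simp only [rotationMatrix, Matrix.mul_apply, Fin.sum_univ_two, Matrix.transpose_apply,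
        Matrix.of_apply, Matrix.cons_val', Matrix.cons_val_zero, Matrix.cons_val_one,
        Matrix.cons_val_fin_one] <;> push_cast
    · linear_combination 2 * h
    · ring
    · ring
    · linear_combination 2 * h
  rw [rotatedLinearField_apply, hM]
  simp [kerVec1, linearField, Fin.sum_univ_two, sub_eq_add_neg]

theorem kerVec2_eq_rotatedLinearField (θ : ℝ) :
    kerVec2 K θ = rotatedLinearField K θ !![0, 2; 0, 0] := by
  have hM : rotationMatrix K θ * (!![0, 2; 0, 0] * (rotationMatrix K θ)ᵀ) =
      !![-((2 * (Real.cos θ * Real.sin θ) : ℝ) : K), ((2 * Real.cos θ ^ 2 : ℝ) : K);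
        -((2 * Real.sin θ ^ 2 : ℝ) : K), ((2 * (Real.cos θ * Real.sin θ) : ℝ) : K)] := by
    ext i j
    fin_cases i <;> fin_cases j <;>
      simp only [rotationMatrix, Matrix.mul_apply, Fin.sum_univ_two, Matrix.transpose_apply,
        Matrix.of_apply, Matrix.cons_val', Matrix.cons_val_zero, Matrix.cons_val_one,
        Matrix.cons_val_fin_one] <;> push_cast <;> ring
  rw [rotatedLinearField_apply, hM]
  simp [kerVec2, linearField, Fin.sum_univ_two]

end RotatedCusp

/-- For every real `θ`, the two linear vector fields `kerVec1 K θ` and `kerVec2 K θ` form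
a basis of `{ξ ∈ V₁ : ξ is 1-liftably tangent to c_θ}`, the kernel of the first reduced
Kodaira–Spencer–Mather map `₁ω̄c_θ` of the rotated cusp. -/
theorem basis_of_kernel_for_rotated_cusp (K : Type*) [RCLike K] (θ : ℝ) :
    (kerVec1 K θ ∈ Vsp K 1 ∧ LiftTang K 1 θ (kerVec1 K θ)) ∧
    (kerVec2 K θ ∈ Vsp K 1 ∧ LiftTang K 1 θ (kerVec2 K θ)) ∧
    LinearIndependent K ![kerVec1 K θ, kerVec2 K θ] ∧
    ∀ ξ : MvPolynomial (Fin 2) K × MvPolynomial (Fin 2) K,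
      ξ ∈ Vsp K 1 → LiftTang K 1 θ ξ →
      ∃ s t : K, ξ = s • kerVec1 K θ + t • kerVec2 K θ := by
  have lift_iff := liftTang_rotatedLinearField_iff (K := K) θ
  rw [kerVec1_eq_rotatedLinearField, kerVec2_eq_rotatedLinearField, ← range_rotatedLinearField θ]
  refine ⟨⟨LinearMap.mem_range_self _ _, (lift_iff _).2 (by norm_num)⟩,
    ⟨LinearMap.mem_range_self _ _, (lift_iff _).2 (by norm_num)⟩, ?_, ?_⟩
  · have := (linearIndependent_standardCuspKernel (F := K)).map' (rotatedLinearField K θ)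
      (LinearMap.ker_eq_bot.2 (rotatedLinearField_injective θ))
    rwa [← FinVec.map_eq] at this
  · rintro _ ⟨N, rfl⟩ hlift
    obtain ⟨h₁₀, h⟩ := (lift_iff N).1 hlift
    refine ⟨N 0 0 / 2, N 0 1 / 2, ?_⟩
    conv_lhs => rw [eq_smul_add_smul_of_mem_standardCuspKernel h₁₀ h]
    rw [map_add, map_smul, map_smul]
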